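/- Let K be a field, n > 1, and a ∈ K[s]^n a nonzero row vector of degree d, with associated coefficient matrix A, basic non-pivotal index set q̃, and row-echelon null vectors b_i. Then the set u = {b_r^♭ : r ∈ q̃} is a μ-basis of a: it has exactly n − 1 elements, the leading vectors LV(b_r^♭) (r ∈ q̃) are linearly independent over K, and u is a basis of the K[s]-module syz(a). -/

import Mathlib

open Polynomial
open scoped Classical

noncomputable section

/-- The degree of a polynomial vector: the maximum of the degrees of the entries. -/
def vdeg {K : Type*} [Field K] {n : ℕ} (h : Fin n → K[X]) : ℕ :=
  Finset.univ.sup fun i => (h i).natDegree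

/-- The leading vector of a polynomial vector: the vector of coefficients of
`s ^ (vdeg h)` in the entries. -/
def LV {K : Type*} [Field K] {n : ℕ} (h : Fin n → K[X]) : Fin n → K :=
  fun i => (h i).coeff (vdeg h)

/-- The syzygy module of a row vector `a` of polynomials. -/
def syz {K : Type*} [Field K] {n : ℕ} (a : Fin n → K[X]) :
    Submodule K[X] (Fin n → K[X]) where
  carrier := {h | ∑ i, a i * h i = 0}
  add_mem' := by
    intro x y hx hy
    simp only [Set.mem_setOf_eq] at *
    simp only [Pi.add_apply, mul_add, Finset.sum_add_distrib, hx, hy, add_zero]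
  zero_mem' := by simp
  smul_mem' := by
    intro c x hx
    simp only [Set.mem_setOf_eq] at *
    have h1 : ∑ i, a i * (c • x) i = c * ∑ i, a i * x i := by
      rw [Finset.mul_sum]
      refine Finset.sum_congr rfl fun i _ => ?_
      simp only [Pi.smul_apply, smul_eq_mul]
      ring
    rw [h1, hx, mul_zero]

/-- The coefficient matrix `A ∈ K^{(2d+1) × n(d+1)}` associated with a polynomial row
vector `a` of degree at most `d`:  `A_{k+1, i+jn} = c_{k-j,i}` where `c_m` is the vector of
coefficients of `s^m` in `a` (with `c_m = 0` for `m < 0` or `m > d`). -/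
def coefA {K : Type*} [Field K] {n : ℕ} (d : ℕ) (hn : 0 < n) (a : Fin n → K[X]) :
    Matrix (Fin (2*d+1)) (Fin (n*(d+1))) K :=
  Matrix.of fun k ℓ =>
    if (ℓ : ℕ) / n ≤ (k : ℕ) then
      (a ⟨(ℓ : ℕ) % n, Nat.mod_lt _ hn⟩).coeff ((k : ℕ) - (ℓ : ℕ) / n)
    else 0

/-- The `♭` isomorphism `K^{n(d+1)} → K[s]^n`: split `v` into `d+1` consecutive blocks
`w_0, …, w_d ∈ K^n` and form `∑_j s^j w_j`. -/
def flatv {K : Type*} [Field K] {n : ℕ} (d : ℕ) (v : Fin (n*(d+1)) → K) : Fin n → K[X] :=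
  fun i => ∑ j : Fin (d+1), C (v ⟨(i:ℕ) + (j:ℕ)*n, by
    calc (i:ℕ) + (j:ℕ)*n < n + (j:ℕ)*n := Nat.add_lt_add_right i.isLt _
      _ = n * ((j:ℕ)+1) := by ring
      _ ≤ n * (d+1) := Nat.mul_le_mul le_rfl j.isLt⟩) * X ^ (j:ℕ)

/-- The `♭` isomorphism `K^m → K[s]` for scalars. -/
def flat1 {K : Type*} [Field K] {m : ℕ} (w : Fin m → K) : K[X] :=
  ∑ k : Fin m, C (w k) * X ^ (k:ℕ)

/-- A column index `j` of a matrix is pivotal if the `j`-th column is not a `K`-linear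
combination of the columns of smaller index. -/
def Pivotal {K : Type*} [Field K] {m N : ℕ} (A : Matrix (Fin m) (Fin N) K) (j : Fin N) : Prop :=
  (fun k => A k j) ∉ Submodule.span K ((fun r : Fin N => fun k => A k r) '' {r | r < j})

/-- A basic non-pivotal index: the minimal non-pivotal index in its residue class modulo `n`. -/
def BasicNP {K : Type*} [Field K] {m N : ℕ} (n : ℕ) (A : Matrix (Fin m) (Fin N) K)
    (r : Fin N) : Prop :=
  ¬ Pivotal A r ∧ ∀ r' : Fin N, ¬ Pivotal A r' → (r':ℕ) % n = (r:ℕ) % n → r ≤ r'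

/-- `B` encodes, for each non-pivotal index `i`, the row-echelon null vector
`b_i = e_i − v_i`: `(b_i)_i = 1`, `(b_i)_j = −α_j` for pivotal `j < i` where
`A_{*i} = Σ α_j A_{*j}`, and all other entries vanish.  Equivalently, `b_i ∈ ker A`,
`(b_i)_i = 1` and `(b_i)_j = 0` unless `j = i` or `j` is pivotal with `j < i`. -/
def IsEchelonNull {K : Type*} [Field K] {m N : ℕ} (A : Matrix (Fin m) (Fin N) K)
    (B : Fin N → Fin N → K) : Prop :=
  ∀ i : Fin N, ¬ Pivotal A i →
    A.mulVec (B i) = 0 ∧ B i i = 1 ∧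
    ∀ j : Fin N, j ≠ i → ¬ (Pivotal A j ∧ j < i) → B i j = 0

/-- Shift an index by `t`, modulo the size (used only when `j + t` is in range). -/
def shiftIdx {N : ℕ} (j : Fin N) (t : ℕ) : Fin N :=
  ⟨((j:ℕ) + t) % N, Nat.mod_lt _ j.pos⟩

/-!
Column `i + j n` of `A` is the coefficient vector of `s ^ j a_i`, so the null vectors of `A` are
exactly the flattened syzygies of degree at most `d`. Multiplying `b_r♭` by `s` shows that the
non-pivotal indices of a residue class modulo `n` form an upper interval. The leading index `j` of
a null vector is non-pivotal, and it can be cancelled by `b_j` if `j` is basic and by the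
flattening of `s b_{j-n}♭` otherwise; by induction on `j`, every syzygy of degree at most `d` lies
in the `K[s]`-span of the basic syzygies.

The leading vector of `b_r♭` has entry `1` at `r mod n` and zeros after it, so the leading vectors
of the basic syzygies are independent over `K`, which forces independence over `K[s]`. They are
orthogonal to `LV(a) ≠ 0`, so there are at most `n - 1` of them; there are at least `n - 1`, because
the at most `2d + 1` pivotal columns cannot fill two residue classes. So they span the hyperplane
`LV(a)⊥`, which contains the leading vector of every syzygy, and this lowers the degree of any
syzygy of degree above `d` by subtracting a combination of basic ones.
-/

section PolynomialVectors

open Matrix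

variable {K : Type*} [Field K] {n : ℕ}

lemma natDegree_le_vdeg (h : Fin n → K[X]) (i : Fin n) : (h i).natDegree ≤ vdeg h :=
  Finset.le_sup (f := fun i => (h i).natDegree) (Finset.mem_univ i)

lemma vdeg_le_iff {h : Fin n → K[X]} {e : ℕ} : vdeg h ≤ e ↔ ∀ i, (h i).natDegree ≤ e := by
  simp [vdeg, Finset.sup_le_iff]

lemma vdeg_lt_of_coeff_eq_zero {h : Fin n → K[X]} {e : ℕ} (he : 0 < e)
    (hdeg : ∀ i, (h i).natDegree ≤ e) (hcoeff : ∀ i, (h i).coeff e = 0) : vdeg h < e := by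
  suffices vdeg h ≤ e - 1 by omega
  refine vdeg_le_iff.2 fun i => natDegree_le_iff_coeff_eq_zero.2 fun k hk => ?_
  obtain rfl | hk := eq_or_lt_of_le (show e ≤ k by omega)
  · exact hcoeff i
  · exact coeff_eq_zero_of_natDegree_lt ((hdeg i).trans_lt hk)

lemma LV_ne_zero {h : Fin n → K[X]} (hh : h ≠ 0) : LV h ≠ 0 := by
  obtain ⟨j, hj⟩ := Function.ne_iff.mp hh
  obtain ⟨i, hi0, hi⟩ := Finset.exists_max_image {i | h i ≠ 0} (fun i => (h i).natDegree)
    ⟨j, by simpa using hj⟩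
  have hvdeg : vdeg h = (h i).natDegree := by
    refine le_antisymm (vdeg_le_iff.2 fun k => ?_) (natDegree_le_vdeg h i)
    by_cases hk : h k = 0
    · simp [hk]
    · exact hi k (by simpa using hk)
  have hi0 : h i ≠ 0 := by simpa using hi0
  exact fun hLV => leadingCoeff_ne_zero.2 hi0 (by rw [leadingCoeff, ← hvdeg]; exact congrFun hLV i)

lemma dotProductBilin_LV_ne_zero {a : Fin n → K[X]} (ha : a ≠ 0) :
    dotProductBilin K K (LV a) ≠ 0 :=
  fun h => LV_ne_zero ha (dotProduct_eq_zero _ fun w => by simpa using LinearMap.congr_fun h w)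

lemma coeff_sum_mul_vdeg_add (a h : Fin n → K[X]) :
    (∑ i, a i * h i).coeff (vdeg a + vdeg h) = LV a ⬝ᵥ LV h := by
  simp only [finsetSum_coeff, dotProduct, LV]
  exact Finset.sum_congr rfl fun i _ =>
    coeff_mul_add_eq_of_natDegree_le (natDegree_le_vdeg a i) (natDegree_le_vdeg h i)

lemma LV_dotProduct_eq_zero_of_mem_syz {a h : Fin n → K[X]} (hh : h ∈ syz a) :
    LV a ⬝ᵥ LV h = 0 := by
  rw [← coeff_sum_mul_vdeg_add, show ∑ i, a i * h i = 0 from hh, coeff_zero]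

lemma linearIndependent_of_linearIndependent_LV {ι : Type*} [Fintype ι]
    {v : ι → Fin n → K[X]} (hLV : LinearIndependent K fun r => LV (v r)) :
    LinearIndependent K[X] v := by
  rw [Fintype.linearIndependent_iff]
  intro g hg
  by_contra! hne
  set S := Finset.univ.filter fun r => g r ≠ 0
  obtain ⟨r₀, hr₀S, hr₀⟩ := S.exists_max_image (fun r => (g r).natDegree + vdeg (v r))
    (by obtain ⟨r, hr⟩ := hne; exact ⟨r, by simpa [S] using hr⟩)
  set e := (g r₀).natDegree + vdeg (v r₀)
  -- the coefficient of `s ^ e` in `∑ g r • v r = 0` is a `K`-combination of leading vectors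
  have hcoeff : ∀ r i, (g r * v r i).coeff e = (g r).coeff (e - vdeg (v r)) * LV (v r) i := by
    intro r i
    by_cases hr : g r = 0
    · simp [hr]
    have hle := hr₀ r (by simpa [S] using hr)
    have := coeff_mul_add_eq_of_natDegree_le (f := g r) (df := e - vdeg (v r)) (by omega)
      (natDegree_le_vdeg (v r) i)
    rwa [Nat.sub_add_cancel (by omega)] at this
  have hsum : ∑ r, (g r).coeff (e - vdeg (v r)) • LV (v r) = 0 := by
    ext i
    simpa [finsetSum_coeff, hcoeff] using congrArg (coeff · e) (congrFun hg i)
  have hlc := Fintype.linearIndependent_iff.1 hLV _ hsum r₀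
  rw [Nat.add_sub_cancel] at hlc
  exact (by simpa [S] using hr₀S : g r₀ ≠ 0) (leadingCoeff_eq_zero.1 hlc)

lemma exists_vdeg_sub_sum_smul_lt {ι : Type*} [Fintype ι] {u : ι → Fin n → K[X]}
    {h : Fin n → K[X]} (hpos : 0 < vdeg h) (hu : ∀ r, vdeg (u r) ≤ vdeg h)
    (hLV : LV h ∈ Submodule.span K (Set.range fun r => LV (u r))) :
    ∃ g : ι → K[X], vdeg (h - ∑ r, g r • u r) < vdeg h := by
  obtain ⟨c, hc⟩ := (Submodule.mem_span_range_iff_exists_fun K).1 hLV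
  refine ⟨fun r => C (c r) * X ^ (vdeg h - vdeg (u r)),
    vdeg_lt_of_coeff_eq_zero hpos (fun i => ?_) (fun i => ?_)⟩
  · simp only [Pi.sub_apply, Finset.sum_apply, Pi.smul_apply, smul_eq_mul]
    refine (natDegree_sub_le _ _).trans (max_le (natDegree_le_vdeg h i)
      (natDegree_sum_le_of_forall_le _ _ fun r _ => natDegree_mul_le.trans ?_))
    have := natDegree_le_vdeg (u r) i
    have := hu r
    have := natDegree_C_mul_X_pow_le (c r) (vdeg h - vdeg (u r))
    omega
  · have hci := congrFun hc i
    simp only [Finset.sum_apply, Pi.smul_apply, smul_eq_mul] at hci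
    simp only [Pi.sub_apply, Finset.sum_apply, Pi.smul_apply, smul_eq_mul, coeff_sub,
      finsetSum_coeff, mul_assoc, coeff_C_mul, coeff_X_pow_mul', Nat.sub_sub_self (hu _),
      Nat.sub_le, if_true]
    exact sub_eq_zero.2 hci.symm

end PolynomialVectors

section LinearAlgebra

variable {K : Type*} [Field K]

lemma linearIndependent_of_triangular {ι κ : Type*} [Fintype ι] [LinearOrder κ]
    {v : ι → κ → K} {π : ι → κ} (hπ : Function.Injective π) (hdiag : ∀ r, v r (π r) ≠ 0)
    (hzero : ∀ r i, π r < i → v r i = 0) : LinearIndependent K v := by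
  rw [Fintype.linearIndependent_iff]
  intro g hg
  by_contra! hne
  obtain ⟨r₀, hr₀S, hr₀⟩ := (Finset.univ.filter fun r => g r ≠ 0).exists_max_image π
    (by obtain ⟨r, hr⟩ := hne; exact ⟨r, by simpa using hr⟩)
  have hcoord := congrFun hg (π r₀)
  simp only [Finset.sum_apply, Pi.smul_apply, smul_eq_mul, Pi.zero_apply] at hcoord
  rw [Finset.sum_eq_single r₀ (fun r _ hr => ?_) (by simp)] at hcoord
  · exact mul_ne_zero (by simpa using hr₀S) (hdiag r₀) hcoord
  · by_cases hgr : g r = 0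
    · simp [hgr]
    · rw [hzero r _ (lt_of_le_of_ne (hr₀ r (by simpa using hgr)) (hπ.ne hr)), mul_zero]

variable {V ι : Type*} [AddCommGroup V] [Module K V] [FiniteDimensional K V] [Fintype ι]
  {f : Module.Dual K V} {w : ι → V}

lemma card_add_one_le_finrank (hf : f ≠ 0) (hw : LinearIndependent K w)
    (hker : ∀ r, f (w r) = 0) : Fintype.card ι + 1 ≤ Module.finrank K V := by
  have hle : Submodule.span K (Set.range w) ≤ LinearMap.ker f :=
    Submodule.span_le.2 (Set.range_subset_iff.2 hker)
  rw [← Module.Dual.finrank_ker_add_one_of_ne_zero hf, ← finrank_span_eq_card hw]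
  exact Nat.add_le_add_right (Submodule.finrank_mono hle) 1

lemma span_eq_ker_of_card_add_one_eq (hf : f ≠ 0) (hw : LinearIndependent K w)
    (hker : ∀ r, f (w r) = 0) (hcard : Fintype.card ι + 1 = Module.finrank K V) :
    Submodule.span K (Set.range w) = LinearMap.ker f := by
  refine Submodule.eq_of_le_of_finrank_eq (Submodule.span_le.2 (Set.range_subset_iff.2 hker)) ?_
  have := Module.Dual.finrank_ker_add_one_of_ne_zero hf
  rw [finrank_span_eq_card hw]
  omega

end LinearAlgebra

section Pivots

open Matrix

variable {K : Type*} [Field K] {m N : ℕ} {A : Matrix (Fin m) (Fin N) K}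

lemma mulVec_eq_sum_smul_col (A : Matrix (Fin m) (Fin N) K) (v : Fin N → K) :
    A *ᵥ v = ∑ ℓ, v ℓ • fun k => A k ℓ := by
  ext k
  simp [mulVec, dotProduct, mul_comm]

lemma not_pivotal_of_mulVec_eq_zero {v : Fin N → K} {j : Fin N} (hv : A *ᵥ v = 0)
    (hj : v j ≠ 0) (habove : ∀ ℓ, j < ℓ → v ℓ = 0) : ¬ Pivotal A j := by
  rw [mulVec_eq_sum_smul_col, ← Finset.add_sum_erase _ _ (Finset.mem_univ j)] at hv
  rw [Pivotal, not_not, ← Submodule.smul_mem_iff _ hj, eq_neg_of_add_eq_zero_left hv]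
  refine neg_mem (Submodule.sum_mem _ fun ℓ hℓ => ?_)
  rcases lt_or_gt_of_ne (Finset.ne_of_mem_erase hℓ) with h | h
  · exact Submodule.smul_mem _ _ (Submodule.subset_span ⟨ℓ, h, rfl⟩)
  · simp [habove ℓ h]

lemma linearIndependent_pivotal_cols :
    LinearIndependent K fun j : {j // Pivotal A j} => fun k => A k j.1 := by
  change LinearIndepOn K (fun j k => A k j) {j | Pivotal A j}
  refine linearIndepOn_iff.2 fun l hl hl0 => ?_
  by_contra hne
  obtain ⟨j, hj, hmax⟩ := l.support.exists_max_image id (Finsupp.support_nonempty_iff.2 hne)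
  refine not_pivotal_of_mulVec_eq_zero (v := l) ?_ (Finsupp.mem_support_iff.1 hj)
    (fun ℓ hℓ => ?_) (hl hj)
  · rw [mulVec_eq_sum_smul_col, ← hl0, Finsupp.linearCombination_apply, Finsupp.sum_fintype]
    simp
  · by_contra h
    exact not_le.2 hℓ (hmax ℓ (Finsupp.mem_support_iff.2 h))

lemma card_pivotal_le (A : Matrix (Fin m) (Fin N) K) : Fintype.card {j // Pivotal A j} ≤ m := by
  simpa using (linearIndependent_pivotal_cols (A := A)).fintype_card_le_finrank

variable {B : Fin N → Fin N → K}

lemma IsEchelonNull.apply_eq_zero_of_lt (hB : IsEchelonNull A B) {i j : Fin N}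
    (hi : ¬ Pivotal A i) (hij : i < j) : B i j = 0 :=
  (hB i hi).2.2 j hij.ne' fun h => h.2.asymm hij

lemma exists_basicNP (n : ℕ) {r : Fin N} (hr : ¬ Pivotal A r) :
    ∃ r₀, BasicNP n A r₀ ∧ (r₀ : ℕ) % n = r % n := by
  obtain ⟨r₀, hr₀, hmin⟩ := (Finset.univ.filter fun r' : Fin N =>
    ¬ Pivotal A r' ∧ (r' : ℕ) % n = r % n).exists_min_image id ⟨r, by simp [hr]⟩
  simp only [Finset.mem_filter, Finset.mem_univ, true_and, id] at hr₀ hmin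
  exact ⟨r₀, ⟨hr₀.1, fun r' hr' hr'mod => hmin r' ⟨hr', hr'mod.trans hr₀.2⟩⟩, hr₀.2⟩

lemma BasicNP.eq_of_mod_eq {n : ℕ} {r r' : Fin N} (hr : BasicNP n A r)
    (hr' : BasicNP n A r') (hmod : (r : ℕ) % n = r' % n) : r = r' :=
  le_antisymm (hr.2 r' hr'.1 hmod.symm) (hr'.2 r hr.1 hmod)

end Pivots

section Flatten

variable {K : Type*} [Field K] {n d : ℕ}

lemma add_mul_lt_mul_succ (i : Fin n) {j : ℕ} (hj : j < d + 1) :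
    (i : ℕ) + j * n < n * (d + 1) :=
  calc (i : ℕ) + j * n < n + j * n := Nat.add_lt_add_right i.isLt _
    _ = n * (j + 1) := by ring
    _ ≤ n * (d + 1) := Nat.mul_le_mul le_rfl hj

lemma pos_of_fin_mul (r : Fin (n * (d + 1))) : 0 < n := Nat.pos_of_mul_pos_right r.pos

lemma div_lt_succ (r : Fin (n * (d + 1))) : (r : ℕ) / n < d + 1 := Nat.div_lt_of_lt_mul r.isLt

def blockEquiv (h0 : 0 < n) (d : ℕ) : Fin n × Fin (d + 1) ≃ Fin (n * (d + 1)) where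
  toFun p := ⟨p.1 + p.2 * n, add_mul_lt_mul_succ p.1 p.2.isLt⟩
  invFun ℓ := (⟨ℓ % n, Nat.mod_lt _ h0⟩, ⟨ℓ / n, div_lt_succ ℓ⟩)
  left_inv p := by
    ext
    · simp [Nat.add_mul_mod_self_right, Nat.mod_eq_of_lt p.1.isLt]
    · simp [Nat.add_mul_div_right _ _ h0, Nat.div_eq_of_lt p.1.isLt]
  right_inv ℓ := Fin.ext (Nat.mod_add_div' _ _)

lemma blockEquiv_apply_mod (h0 : 0 < n) (p : Fin n × Fin (d + 1)) :
    (blockEquiv h0 d p : ℕ) % n = p.1 := by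
  simp [blockEquiv, Nat.add_mul_mod_self_right, Nat.mod_eq_of_lt p.1.isLt]

lemma flatv_coeff (v : Fin (n * (d + 1)) → K) (i : Fin n) {j : ℕ} (hj : j < d + 1) :
    (flatv d v i).coeff j = v ⟨i + j * n, add_mul_lt_mul_succ i hj⟩ := by
  rw [flatv, finsetSum_coeff, Finset.sum_eq_single ⟨j, hj⟩]
  · simp [coeff_C_mul, coeff_X_pow]
  · intro b _ hb
    simp [coeff_C_mul, coeff_X_pow, show j ≠ b from fun h => hb (Fin.ext h.symm)]
  · simp

lemma natDegree_flatv_le (v : Fin (n * (d + 1)) → K) (i : Fin n) :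
    (flatv d v i).natDegree ≤ d :=
  natDegree_sum_le_of_forall_le _ _ fun j _ =>
    (natDegree_C_mul_X_pow_le _ _).trans (Nat.lt_succ_iff.mp j.isLt)

lemma flatv_coeff_eq_zero_of_lt (v : Fin (n * (d + 1)) → K) (i : Fin n) {j : ℕ} (hj : d < j) :
    (flatv d v i).coeff j = 0 :=
  coeff_eq_zero_of_natDegree_lt ((natDegree_flatv_le v i).trans_lt hj)

variable (K n d) in
def flatvₗ : (Fin (n * (d + 1)) → K) →ₗ[K] Fin n → K[X] where
  toFun := flatv d
  map_add' v w := by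
    ext i : 1
    simp only [flatv, Pi.add_apply, map_add, add_mul, Finset.sum_add_distrib]
  map_smul' c v := by
    ext i : 1
    simp only [flatv, Pi.smul_apply, smul_eq_mul, map_mul, RingHom.id_apply, smul_eq_C_mul,
      Finset.mul_sum, mul_assoc]

@[simp]
lemma flatvₗ_apply (v : Fin (n * (d + 1)) → K) : flatvₗ K n d v = flatv d v := rfl

lemma exists_flatv_eq (h0 : 0 < n) {h : Fin n → K[X]} (hdeg : ∀ i, (h i).natDegree ≤ d) :
    ∃ v, flatv d v = h := by
  refine ⟨fun ℓ => (h ((blockEquiv h0 d).symm ℓ).1).coeff ((blockEquiv h0 d).symm ℓ).2, ?_⟩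
  ext i j
  by_cases hj : j < d + 1
  · rw [flatv_coeff _ _ hj]
    have := (blockEquiv h0 d).symm_apply_apply (i, ⟨j, hj⟩)
    simp only [blockEquiv, Equiv.coe_fn_mk, Equiv.coe_fn_symm_mk, Prod.ext_iff, Fin.mk.injEq]
      at this ⊢
    rw [this.1, this.2]
  · rw [flatv_coeff_eq_zero_of_lt _ _ (by omega),
      coeff_eq_zero_of_natDegree_lt ((hdeg i).trans_lt (by omega))]

variable {v : Fin (n * (d + 1)) → K} {r : Fin (n * (d + 1))}

lemma flatv_coeff_div (v : Fin (n * (d + 1)) → K) (r : Fin (n * (d + 1))) :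
    (flatv d v ⟨r % n, Nat.mod_lt _ (pos_of_fin_mul r)⟩).coeff (r / n) = v r := by
  rw [flatv_coeff _ _ (div_lt_succ r)]
  exact congrArg v (Fin.ext (Nat.mod_add_div' _ _))

lemma natDegree_flatv_le_div (hv : ∀ ℓ, r < ℓ → v ℓ = 0) (i : Fin n) :
    (flatv d v i).natDegree ≤ r / n := by
  refine natDegree_le_iff_coeff_eq_zero.2 fun j hj => ?_
  by_cases hjd : j < d + 1
  · rw [flatv_coeff _ _ hjd]
    exact hv _ ((Nat.lt_mul_of_div_lt hj (pos_of_fin_mul r)).trans_le (Nat.le_add_left _ _))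
  · exact flatv_coeff_eq_zero_of_lt _ _ (by omega)

lemma vdeg_flatv_eq (hr : v r ≠ 0) (hv : ∀ ℓ, r < ℓ → v ℓ = 0) :
    vdeg (flatv d v) = r / n :=
  le_antisymm (vdeg_le_iff.2 (natDegree_flatv_le_div hv))
    ((le_natDegree_of_ne_zero (by rwa [flatv_coeff_div])).trans (natDegree_le_vdeg _ _))

lemma LV_flatv_apply (hr : v r ≠ 0) (hv : ∀ ℓ, r < ℓ → v ℓ = 0) (i : Fin n) :
    LV (flatv d v) i = v ⟨i + r / n * n, add_mul_lt_mul_succ i (div_lt_succ r)⟩ := by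
  rw [LV, vdeg_flatv_eq hr hv, flatv_coeff _ _ (div_lt_succ r)]

lemma LV_flatv_mod (hr : v r ≠ 0) (hv : ∀ ℓ, r < ℓ → v ℓ = 0) :
    LV (flatv d v) ⟨r % n, Nat.mod_lt _ (pos_of_fin_mul r)⟩ = v r := by
  rw [LV, vdeg_flatv_eq hr hv, flatv_coeff_div]

lemma LV_flatv_eq_zero_of_mod_lt (hr : v r ≠ 0) (hv : ∀ ℓ, r < ℓ → v ℓ = 0) {i : Fin n}
    (hi : (r : ℕ) % n < i) : LV (flatv d v) i = 0 := by
  rw [LV_flatv_apply hr hv]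
  exact hv _ (show (r : ℕ) < i + r / n * n by have := Nat.mod_add_div' (r : ℕ) n; omega)

/-- The coefficient vector of `s • v♭`: every entry moves up by one block. -/
def shiftVec (v : Fin (n * (d + 1)) → K) : Fin (n * (d + 1)) → K :=
  fun ℓ => if h : n ≤ (ℓ : ℕ) then v ⟨ℓ - n, by omega⟩ else 0

lemma flatv_shiftVec (hv : ∀ ℓ : Fin (n * (d + 1)), n * d ≤ ℓ → v ℓ = 0) :
    flatv d (shiftVec v) = (X : K[X]) • flatv d v := by
  ext i j
  rw [Pi.smul_apply, smul_eq_mul]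
  cases j with
  | zero =>
    rw [mul_coeff_zero, coeff_X_zero, zero_mul, flatv_coeff _ _ d.succ_pos]
    exact dif_neg (by simp)
  | succ j =>
    rw [coeff_X_mul]
    by_cases hj : j + 1 < d + 1
    · rw [flatv_coeff _ _ hj, flatv_coeff _ _ (by omega), shiftVec,
        dif_pos (by simp only [add_mul, one_mul]; omega)]
      congr 2
      simp only [add_mul, one_mul]
      omega
    · rw [flatv_coeff_eq_zero_of_lt _ _ (by omega)]
      obtain rfl | hjd := eq_or_lt_of_le (show d ≤ j by omega)
      · rw [flatv_coeff _ _ d.lt_succ_self, hv]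
        rw [mul_comm]
        exact Nat.le_add_left _ _
      · rw [flatv_coeff_eq_zero_of_lt _ _ hjd]

lemma shiftVec_apply_add (h : (r : ℕ) + n < n * (d + 1)) : shiftVec v ⟨r + n, h⟩ = v r := by
  simp [shiftVec]

lemma shiftVec_eq_zero (hv : ∀ ℓ, r < ℓ → v ℓ = 0) {ℓ : Fin (n * (d + 1))}
    (hℓ : (r : ℕ) + n < ℓ) : shiftVec v ℓ = 0 := by
  rw [shiftVec, dif_pos (by omega)]
  exact hv _ (show (r : ℕ) < ℓ - n by omega)

end Flatten

section CoefficientMatrix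

open Matrix

variable {K : Type*} [Field K] {n d : ℕ}

lemma coefA_apply (h0 : 0 < n) (a : Fin n → K[X]) (k : Fin (2 * d + 1))
    (ℓ : Fin (n * (d + 1))) :
    coefA d h0 a k ℓ = (a ⟨ℓ % n, Nat.mod_lt _ h0⟩ * X ^ ((ℓ : ℕ) / n)).coeff k := by
  rw [coeff_mul_X_pow']
  rfl

lemma sum_mul_flatv (h0 : 0 < n) (a : Fin n → K[X]) (v : Fin (n * (d + 1)) → K) :
    ∑ i, a i * flatv d v i =
      ∑ ℓ, v ℓ • (a ⟨ℓ % n, Nat.mod_lt _ h0⟩ * X ^ ((ℓ : ℕ) / n)) := by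
  rw [← (blockEquiv h0 d).sum_comp, Fintype.sum_prod_type]
  refine Finset.sum_congr rfl fun i _ => ?_
  rw [flatv, Finset.mul_sum]
  refine Finset.sum_congr rfl fun j _ => ?_
  have := (blockEquiv h0 d).symm_apply_apply (i, j)
  simp only [blockEquiv, Equiv.coe_fn_mk, Equiv.coe_fn_symm_mk, Prod.ext_iff, Fin.ext_iff] at this
  simp only [blockEquiv, Equiv.coe_fn_mk, smul_eq_C_mul, this.2]
  rw [show (⟨(i + j * n) % n, _⟩ : Fin n) = i from Fin.ext this.1]
  ring

lemma coefA_mulVec_apply (h0 : 0 < n) (a : Fin n → K[X]) (v : Fin (n * (d + 1)) → K)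
    (k : Fin (2 * d + 1)) : (coefA d h0 a *ᵥ v) k = (∑ i, a i * flatv d v i).coeff k := by
  simp [sum_mul_flatv h0, finsetSum_coeff, mulVec, dotProduct, coefA_apply h0, mul_comm]

lemma coefA_mulVec_eq_zero_iff (h0 : 0 < n) {a : Fin n → K[X]}
    (ha : ∀ i, (a i).natDegree ≤ d) (v : Fin (n * (d + 1)) → K) :
    coefA d h0 a *ᵥ v = 0 ↔ flatv d v ∈ syz a := by
  change _ ↔ ∑ i, a i * flatv d v i = 0
  constructor
  · intro hv
    refine ext fun k => ?_
    by_cases hk : k < 2 * d + 1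
    · simpa [coefA_mulVec_apply h0] using congrFun hv ⟨k, hk⟩
    · refine coeff_eq_zero_of_natDegree_lt (lt_of_le_of_lt (b := 2 * d) ?_ (by omega))
      refine natDegree_sum_le_of_forall_le _ _ fun i _ => ?_
      exact (natDegree_mul_le_of_le (ha i) (natDegree_flatv_le v i)).trans (by omega)
  · intro hv
    ext k
    simp [coefA_mulVec_apply h0, hv]

/-- `2 (d + 1)` columns do not fit among the at most `2 d + 1` pivotal ones. -/
lemma eq_of_forall_pivotal {A : Matrix (Fin (2 * d + 1)) (Fin (n * (d + 1))) K} (h0 : 0 < n)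
    {i j : Fin n} (hi : ∀ r : Fin (n * (d + 1)), (r : ℕ) % n = i → Pivotal A r)
    (hj : ∀ r : Fin (n * (d + 1)), (r : ℕ) % n = j → Pivotal A r) : i = j := by
  by_contra hij
  let col : Fin (d + 1) ⊕ Fin (d + 1) → {r // Pivotal A r} :=
    Sum.elim (fun k => ⟨blockEquiv h0 d (i, k), hi _ (blockEquiv_apply_mod h0 _)⟩)
      (fun k => ⟨blockEquiv h0 d (j, k), hj _ (blockEquiv_apply_mod h0 _)⟩)
  have hcol : Function.Injective col := by
    refine Function.Injective.sumElim ?_ ?_ fun k k' h => hij ?_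
    · intro k k' h
      simpa using (blockEquiv h0 d).injective (congrArg Subtype.val h)
    · intro k k' h
      simpa using (blockEquiv h0 d).injective (congrArg Subtype.val h)
    · simpa using congrArg Prod.fst ((blockEquiv h0 d).injective (congrArg Subtype.val h))
  have := (Fintype.card_le_of_injective col hcol).trans (card_pivotal_le A)
  simp only [Fintype.card_sum, Fintype.card_fin] at this
  omega

lemma le_card_basicNP_add_one (A : Matrix (Fin (2 * d + 1)) (Fin (n * (d + 1))) K)
    (h0 : 0 < n) : n ≤ Fintype.card {r // BasicNP n A r} + 1 := by
  let P : Fin n → Prop := fun i => ∃ r : Fin (n * (d + 1)), ¬ Pivotal A r ∧ (r : ℕ) % n = i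
  have hP : Fintype.card {i // P i} ≤ Fintype.card {r // BasicNP n A r} := by
    refine Fintype.card_le_of_surjective
      (fun r => ⟨⟨r.1 % n, Nat.mod_lt _ h0⟩, r.1, r.2.1, rfl⟩) fun ⟨i, r, hr, hri⟩ => ?_
    obtain ⟨r₀, hr₀, hmod⟩ := exists_basicNP n hr
    exact ⟨⟨r₀, hr₀⟩, Subtype.ext (Fin.ext (hmod.trans hri))⟩
  have hnotP : Fintype.card {i // ¬ P i} ≤ 1 := by
    refine Fintype.card_le_one_iff.2 fun ⟨i, hi⟩ ⟨j, hj⟩ => Subtype.ext ?_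
    simp only [P, not_exists, not_and] at hi hj
    exact eq_of_forall_pivotal h0 (fun r hr => not_not.1 fun hp => hi r hp hr)
      (fun r hr => not_not.1 fun hp => hj r hp hr)
  have hcompl := Fintype.card_subtype_compl P
  have hle := Fintype.card_subtype_le P
  simp only [Fintype.card_fin] at hcompl hle
  omega

end CoefficientMatrix

section Syzygies

open Matrix

variable {K : Type*} [Field K] {n d : ℕ} {B : Fin (n * (d + 1)) → Fin (n * (d + 1)) → K}

lemma linearIndependent_LV_basicNP {m : ℕ} {A : Matrix (Fin m) (Fin (n * (d + 1))) K}
    (hB : IsEchelonNull A B) :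
    LinearIndependent K fun r : {r // BasicNP n A r} => LV (flatv d (B r)) := by
  have hone : ∀ r : {r // BasicNP n A r}, B r r ≠ 0 := fun r => by simp [(hB r r.2.1).2.1]
  have habove := fun r : {r // BasicNP n A r} => fun ℓ => hB.apply_eq_zero_of_lt (j := ℓ) r.2.1
  refine linearIndependent_of_triangular
    (π := fun r => ⟨r.1 % n, Nat.mod_lt _ (pos_of_fin_mul r.1)⟩)
    (fun r r' h => Subtype.ext (r.2.eq_of_mod_eq r'.2 (congrArg Fin.val h)))
    (fun r => ?_) (fun r i hi => LV_flatv_eq_zero_of_mod_lt (hone r) (habove r) hi)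
  rw [LV_flatv_mod (hone r) (habove r)]
  exact hone r

variable {h0 : 0 < n} {a : Fin n → K[X]} (hda : ∀ i, (a i).natDegree ≤ d)
  (hB : IsEchelonNull (coefA d h0 a) B)
include hda hB

lemma flatv_mem_syz_of_not_pivotal {r : Fin (n * (d + 1))}
    (hr : ¬ Pivotal (coefA d h0 a) r) : flatv d (B r) ∈ syz a :=
  (coefA_mulVec_eq_zero_iff h0 hda _).1 (hB r hr).1

lemma exists_mulVec_eq_zero_flatv_eq_X_smul {r : Fin (n * (d + 1))}
    (hr : ¬ Pivotal (coefA d h0 a) r) (h : (r : ℕ) + n < n * (d + 1)) :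
    ∃ w, coefA d h0 a *ᵥ w = 0 ∧ w ⟨r + n, h⟩ = 1 ∧ (∀ ℓ, ⟨r + n, h⟩ < ℓ → w ℓ = 0) ∧
      flatv d w = (X : K[X]) • flatv d (B r) := by
  have habove : ∀ ℓ, r < ℓ → B r ℓ = 0 := fun ℓ => hB.apply_eq_zero_of_lt hr
  have hflat : flatv d (shiftVec (B r)) = (X : K[X]) • flatv d (B r) := by
    refine flatv_shiftVec fun ℓ hℓ => habove ℓ (show (r : ℕ) < ℓ from ?_)
    have : n * (d + 1) = n * d + n := by ring
    omega
  refine ⟨shiftVec (B r), ?_, ?_, fun ℓ hℓ => shiftVec_eq_zero habove hℓ, hflat⟩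
  · rw [coefA_mulVec_eq_zero_iff h0 hda, hflat]
    exact Submodule.smul_mem _ _ (flatv_mem_syz_of_not_pivotal hda hB hr)
  · rw [shiftVec_apply_add, (hB r hr).2.1]

lemma not_pivotal_add {r : Fin (n * (d + 1))} (hr : ¬ Pivotal (coefA d h0 a) r)
    (h : (r : ℕ) + n < n * (d + 1)) : ¬ Pivotal (coefA d h0 a) ⟨r + n, h⟩ := by
  obtain ⟨w, hw, hw₁, hwabove, -⟩ := exists_mulVec_eq_zero_flatv_eq_X_smul hda hB hr h
  exact not_pivotal_of_mulVec_eq_zero hw (by simp [hw₁]) hwabove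

lemma not_pivotal_of_le_of_mod_eq {r : Fin (n * (d + 1))} (hr : ¬ Pivotal (coefA d h0 a) r)
    (ℓ : Fin (n * (d + 1))) (hle : r ≤ ℓ) (hmod : (ℓ : ℕ) % n = r % n) :
    ¬ Pivotal (coefA d h0 a) ℓ := by
  obtain rfl | hlt := hle.eq_or_lt
  · exact hr
  have hrn : (r : ℕ) + n ≤ ℓ := Nat.ModEq.add_le_of_lt hmod.symm hlt
  have hprev := not_pivotal_of_le_of_mod_eq hr ⟨ℓ - n, by omega⟩
    (show (r : ℕ) ≤ ℓ - n by omega) ((Nat.mod_eq_sub_mod (by omega)).symm.trans hmod)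
  convert not_pivotal_add hda hB hprev (show ℓ - n + n < n * (d + 1) by omega)
  exact (Nat.sub_add_cancel (by omega)).symm
termination_by (ℓ : ℕ)

lemma not_pivotal_sub_of_not_basicNP {r : Fin (n * (d + 1))}
    (hr : ¬ Pivotal (coefA d h0 a) r) (hrb : ¬ BasicNP n (coefA d h0 a) r) :
    ∃ h : n ≤ (r : ℕ), ¬ Pivotal (coefA d h0 a) ⟨r - n, by omega⟩ := by
  simp only [BasicNP, hr, not_false_eq_true, true_and, not_forall, not_le] at hrb
  obtain ⟨r', hr', hmod, hlt⟩ := hrb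
  have hrn : (r' : ℕ) + n ≤ r := Nat.ModEq.add_le_of_lt hmod hlt
  exact ⟨by omega, not_pivotal_of_le_of_mod_eq hda hB hr' _ (show (r' : ℕ) ≤ r - n by omega)
    ((Nat.mod_eq_sub_mod (by omega)).symm.trans hmod.symm)⟩

lemma exists_mulVec_eq_zero_flatv_mem_span {j : Fin (n * (d + 1))}
    (hj : ¬ Pivotal (coefA d h0 a) j)
    (ih : ∀ v, coefA d h0 a *ᵥ v = 0 → (∀ ℓ : Fin (n * (d + 1)), (j : ℕ) ≤ ℓ → v ℓ = 0) →
      flatv d v ∈ Submodule.span K[X]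
        (Set.range fun r : {r // BasicNP n (coefA d h0 a) r} => flatv d (B r))) :
    ∃ w, coefA d h0 a *ᵥ w = 0 ∧ w j = 1 ∧ (∀ ℓ, j < ℓ → w ℓ = 0) ∧
      flatv d w ∈ Submodule.span K[X]
        (Set.range fun r : {r // BasicNP n (coefA d h0 a) r} => flatv d (B r)) := by
  by_cases hjb : BasicNP n (coefA d h0 a) j
  · exact ⟨B j, (hB j hj).1, (hB j hj).2.1, fun ℓ => hB.apply_eq_zero_of_lt hj,
      Submodule.subset_span ⟨⟨j, hjb⟩, rfl⟩⟩
  obtain ⟨hnj, hj'⟩ := not_pivotal_sub_of_not_basicNP hda hB hj hjb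
  obtain ⟨w, hw, hwj, hwabove, hwflat⟩ :=
    exists_mulVec_eq_zero_flatv_eq_X_smul hda hB hj' (show j - n + n < n * (d + 1) by omega)
  have hj_eq : (⟨j - n + n, by omega⟩ : Fin (n * (d + 1))) = j := Fin.ext (by simp only; omega)
  rw [hj_eq] at hwj hwabove
  refine ⟨w, hw, hwj, hwabove, hwflat ▸ Submodule.smul_mem _ _ ?_⟩
  exact ih _ (hB _ hj').1 fun ℓ hℓ => hB.apply_eq_zero_of_lt hj' (show (j : ℕ) - n < ℓ by omega)

lemma flatv_mem_span_basicNP {v : Fin (n * (d + 1)) → K} (hv : coefA d h0 a *ᵥ v = 0) :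
    flatv d v ∈ Submodule.span K[X]
      (Set.range fun r : {r // BasicNP n (coefA d h0 a) r} => flatv d (B r)) := by
  set U := Submodule.span K[X]
    (Set.range fun r : {r // BasicNP n (coefA d h0 a) r} => flatv d (B r))
  suffices H : ∀ t : ℕ, ∀ v, coefA d h0 a *ᵥ v = 0 →
      (∀ ℓ : Fin (n * (d + 1)), t ≤ ℓ → v ℓ = 0) → flatv d v ∈ U from
    H _ v hv fun ℓ hℓ => absurd ℓ.isLt (not_lt.2 hℓ)
  intro t
  induction t using Nat.strong_induction_on with
  | _ t ih =>
  intro v hv hvt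
  rcases t with _ | t
  · rw [show v = 0 from funext fun ℓ => hvt ℓ (Nat.zero_le _), ← flatvₗ_apply, map_zero]
    exact zero_mem U
  by_cases hvt' : ∀ ℓ : Fin (n * (d + 1)), t ≤ ℓ → v ℓ = 0
  · exact ih t (by omega) v hv hvt'
  push Not at hvt'
  obtain ⟨j, hjt, hvj⟩ := hvt'
  have hjt : (j : ℕ) = t := le_antisymm (not_lt.1 fun h => hvj (hvt j h)) hjt
  have hvabove : ∀ ℓ, j < ℓ → v ℓ = 0 := fun ℓ hℓ => hvt ℓ (show t + 1 ≤ ℓ by omega)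
  obtain ⟨w, hw, hwj, hwabove, hwU⟩ := exists_mulVec_eq_zero_flatv_mem_span hda hB
    (not_pivotal_of_mulVec_eq_zero hv hvj hvabove) (hjt ▸ ih t (by omega))
  have hv' : coefA d h0 a *ᵥ (v - v j • w) = 0 := by
    rw [mulVec_sub, mulVec_smul, hv, hw, smul_zero, sub_zero]
  have hv't : ∀ ℓ : Fin (n * (d + 1)), t ≤ ℓ → (v - v j • w) ℓ = 0 := by
    intro ℓ hℓ
    obtain rfl | hlt := eq_or_lt_of_le (show j ≤ ℓ by omega)
    · simp [hwj]
    · simp [hvabove ℓ hlt, hwabove ℓ hlt]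
  have hdecomp : flatv d v = flatv d (v - v j • w) + v j • flatv d w := by
    simp only [← flatvₗ_apply, map_sub, map_smul, sub_add_cancel]
  rw [hdecomp]
  exact add_mem (ih t (by omega) _ hv' hv't) (Submodule.smul_of_tower_mem _ _ hwU)

lemma dotProductBilin_LV_flatv_basicNP_eq_zero (r : {r // BasicNP n (coefA d h0 a) r}) :
    dotProductBilin K K (LV a) (LV (flatv d (B r))) = 0 := by
  simpa using LV_dotProduct_eq_zero_of_mem_syz (flatv_mem_syz_of_not_pivotal hda hB r.2.1)

lemma card_basicNP_add_one_le (ha : a ≠ 0) :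
    Fintype.card {r // BasicNP n (coefA d h0 a) r} + 1 ≤ n := by
  simpa using card_add_one_le_finrank (dotProductBilin_LV_ne_zero ha)
    (linearIndependent_LV_basicNP hB) (dotProductBilin_LV_flatv_basicNP_eq_zero hda hB)

lemma syz_le_span_basicNP (ha : a ≠ 0)
    (hcard : Fintype.card {r // BasicNP n (coefA d h0 a) r} + 1 = n) :
    syz a ≤ Submodule.span K[X]
      (Set.range fun r : {r // BasicNP n (coefA d h0 a) r} => flatv d (B r)) := by
  intro h hh
  induction he : vdeg h using Nat.strong_induction_on generalizing h with
  | _ e ih =>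
  by_cases hle : vdeg h ≤ d
  · obtain ⟨v, rfl⟩ := exists_flatv_eq h0 fun i => (natDegree_le_vdeg h i).trans hle
    exact flatv_mem_span_basicNP hda hB ((coefA_mulVec_eq_zero_iff h0 hda v).2 hh)
  have hLV : LV h ∈ Submodule.span K
      (Set.range fun r : {r // BasicNP n (coefA d h0 a) r} => LV (flatv d (B r))) := by
    rw [span_eq_ker_of_card_add_one_eq (dotProductBilin_LV_ne_zero ha)
      (linearIndependent_LV_basicNP hB) (dotProductBilin_LV_flatv_basicNP_eq_zero hda hB)
      (by simpa using hcard)]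
    simpa using LV_dotProduct_eq_zero_of_mem_syz hh
  obtain ⟨g, hg⟩ := exists_vdeg_sub_sum_smul_lt (by omega)
    (fun r => (vdeg_le_iff.2 (natDegree_flatv_le _)).trans (by omega)) hLV
  have hsyz : ∀ r : {r // BasicNP n (coefA d h0 a) r}, flatv d (B r) ∈ syz a :=
    fun r => flatv_mem_syz_of_not_pivotal hda hB r.2.1
  have hrest := ih _ (he ▸ hg)
    (sub_mem hh (sum_mem fun r _ => Submodule.smul_mem _ _ (hsyz r))) rfl
  simpa using add_mem hrest (sum_mem (t := Finset.univ) fun r _ =>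
    Submodule.smul_mem _ (g r) (Submodule.subset_span ⟨r, rfl⟩))

end Syzygies

/-- Main theorem: the basic row-echelon syzygies form a μ-basis.
The set `u = {b_r^♭ : r basic non-pivotal}` has exactly `n − 1` elements, its leading
vectors are linearly independent over `K`, and it is a basis of the `K[s]`-module
`syz a` (linearly independent over `K[s]` and spanning `syz a`). -/
theorem basic_row_echelon_syzygies_form_mu_basis {K : Type*} [Field K] {n : ℕ}
    (hn : 1 < n) (a : Fin n → K[X]) (ha : a ≠ 0) {d : ℕ} (hd : vdeg a = d)
    (A : Matrix (Fin (2*d+1)) (Fin (n*(d+1))) K)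
    (hA : A = coefA d (Nat.zero_lt_of_lt hn) a)
    (B : Fin (n*(d+1)) → Fin (n*(d+1)) → K) (hB : IsEchelonNull A B) :
    {r : Fin (n*(d+1)) | BasicNP n A r}.ncard = n - 1 ∧
    LinearIndependent K
      (fun r : {r : Fin (n*(d+1)) // BasicNP n A r} => LV (flatv d (B r.1))) ∧
    LinearIndependent K[X]
      (fun r : {r : Fin (n*(d+1)) // BasicNP n A r} => flatv d (B r.1)) ∧
    Submodule.span K[X]
      (Set.range fun r : {r : Fin (n*(d+1)) // BasicNP n A r} => flatv d (B r.1))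
      = syz a := by
  subst hA
  have hda : ∀ i, (a i).natDegree ≤ d := hd ▸ natDegree_le_vdeg a
  have hcard := le_antisymm (card_basicNP_add_one_le hda hB ha)
    (le_card_basicNP_add_one _ (Nat.zero_lt_of_lt hn))
  have hLV := linearIndependent_LV_basicNP hB
  refine ⟨?_, hLV, linearIndependent_of_linearIndependent_LV hLV, le_antisymm ?_ ?_⟩
  · rw [← Nat.card_coe_set_eq, Set.coe_ofPred, Nat.card_eq_fintype_card]
    omega
  · exact Submodule.span_le.2
      (Set.range_subset_iff.2 fun r => flatv_mem_syz_of_not_pivotal hda hB r.2.1)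
  · exact syz_le_span_basicNP hda hB ha hcard
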